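/- The Type II ℓ=3 graph P(p,s), regarded as a graph on the disjoint union of its variable nodes and constraint nodes, has girth exactly 6 and diameter exactly 3. -/

import Mathlib

open scoped Classical

namespace TypeII3

/-- Variable nodes of the Type II ℓ=3 graph: the root `r`, the nodes `(x,j)` (j ∈ F, with
`x` a formal symbol), and the nodes `(i,j)` (i, j ∈ F). -/
abbrev VN (F : Type*) := Unit ⊕ (F ⊕ (F × F))

/-- Constraint nodes of the Type II ℓ=3 graph: `c_x`, the nodes `c_i` (i ∈ F), and the
nodes `(a,b)'` (a, b ∈ F). -/
abbrev CN (F : Type*) := Unit ⊕ (F ⊕ (F × F))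

/-- Adjacency of the Type II ℓ=3 graph `P(p,s)`:
`r ~ c_x`; `r ~ c_i`; `c_x ~ (x,j)`; `c_i ~ (i,j)`; `(x,j) ~ (j,b)'` for every `b`; and
`(i,j) ~ (a, j + i·a)'` for every `a`. -/
def adj (F : Type*) [Field F] : VN F → CN F → Prop
  | Sum.inl _, Sum.inl _ => True                             -- r ~ c_x
  | Sum.inl _, Sum.inr (Sum.inl _) => True                   -- r ~ c_i
  | Sum.inl _, Sum.inr (Sum.inr _) => False
  | Sum.inr (Sum.inl _), Sum.inl _ => True                   -- (x,j) ~ c_x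
  | Sum.inr (Sum.inl _), Sum.inr (Sum.inl _) => False
  | Sum.inr (Sum.inl j), Sum.inr (Sum.inr (a, _)) => a = j   -- (x,j) ~ (j,b)'
  | Sum.inr (Sum.inr _), Sum.inl _ => False
  | Sum.inr (Sum.inr (i, _)), Sum.inr (Sum.inl k) => k = i   -- c_i ~ (i,j)
  | Sum.inr (Sum.inr (i, j)), Sum.inr (Sum.inr (a, b)) => b = j + i * a

end TypeII3

/-- The simple graph on the disjoint union `V ⊕ C` associated to a bipartite adjacency
relation between variable nodes `V` and constraint nodes `C`. -/
def bip {V C : Type*} (adj : V → C → Prop) : SimpleGraph (V ⊕ C) where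
  Adj x y :=
    (∃ v c, x = Sum.inl v ∧ y = Sum.inr c ∧ adj v c) ∨
    (∃ v c, x = Sum.inr c ∧ y = Sum.inl v ∧ adj v c)
  symm := by
    constructor
    rintro x y (⟨v, c, hx, hy, h⟩ | ⟨v, c, hx, hy, h⟩)
    · exact Or.inr ⟨v, c, hy, hx, h⟩
    · exact Or.inl ⟨v, c, hy, hx, h⟩
  loopless := by
    constructor
    rintro x (⟨v, c, hx, hy, h⟩ | ⟨v, c, hx, hy, h⟩) <;> subst hx <;> simp at hy

/-! Variable and constraint nodes are the lines and points of the projective plane over `F`: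
`(i,j) ~ (a,b)'` says that the affine point `(a,b)` lies on the line `b = j + i·a` of slope `i`,
`(x,j)` is the vertical line `a = j`, `c_i` is the point at infinity of slope `i`, `c_x` the
vertical one, and `r` is the line at infinity. Two distinct lines meet in exactly one point and
two distinct points lie on exactly one line. The first fact excludes 4-cycles, so the bipartite
graph has girth at least 6; together the two facts bound the diameter by 3. Three lines in general
position give a 6-cycle, and a point off a line is at distance 3 from it. -/

open SimpleGraph

lemma SimpleGraph.Walk.IsCycle.exists_of_length_eq_four {α : Type*} {G : SimpleGraph α} {a : α}
    {w : G.Walk a a} (hw : w.IsCycle) (h4 : w.length = 4) :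
    ∃ b c d, G.Adj a b ∧ G.Adj b c ∧ G.Adj c d ∧ G.Adj d a ∧ a ≠ c ∧ b ≠ d := by
  match w, hw, h4 with
  | .cons h1 (.cons h2 (.cons h3 (.cons h4 .nil))), hw, _ =>
    have hnd := hw.support_nodup
    simp only [Walk.support_cons, Walk.support_nil, List.tail_cons, List.nodup_cons,
      List.mem_cons, List.not_mem_nil, or_false, List.nodup_nil, and_true,
      not_or] at hnd
    obtain ⟨⟨-, hbd, -⟩, ⟨-, hca⟩, -⟩ := hnd
    exact ⟨_, _, _, h1, h2, h3, h4, Ne.symm hca, hbd⟩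

lemma edist_le_two_of_adj_of_adj {α : Type*} {G : SimpleGraph α} {u v w : α} (huv : G.Adj u v)
    (hvw : G.Adj v w) : G.edist u w ≤ 2 :=
  (Walk.cons huv (.cons hvw .nil)).edist_le

section Bipartite

variable {V C : Type*} {adj : V → C → Prop}

@[simp] lemma bip_adj_inl_inr {v : V} {c : C} : (bip adj).Adj (.inl v) (.inr c) ↔ adj v c := by
  simp [bip]

@[simp] lemma bip_adj_inr_inl {v : V} {c : C} : (bip adj).Adj (.inr c) (.inl v) ↔ adj v c := by
  simp [bip]

@[simp] lemma bip_not_adj_inl_inl {v v' : V} : ¬(bip adj).Adj (.inl v) (.inl v') := by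
  simp [bip]

@[simp] lemma bip_not_adj_inr_inr {c c' : C} : ¬(bip adj).Adj (.inr c) (.inr c') := by
  simp [bip]

def bipColoring (adj : V → C → Prop) : (bip adj).Coloring Bool :=
  Coloring.mk Sum.isRight <| by rintro (v | c) (v' | c') h <;> simp_all

lemma bip_even_length_iff {x y : V ⊕ C} (w : (bip adj).Walk x y) :
    Even w.length ↔ (x.isRight ↔ y.isRight) :=
  (bipColoring adj).even_length_iff_congr w

lemma three_le_edist_bip {v : V} {c : C} (h : ¬adj v c) :
    3 ≤ (bip adj).edist (.inl v) (.inr c) := by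
  refine le_sInf ?_
  rintro _ ⟨w, rfl⟩
  have hodd : ¬Even w.length := by simp [bip_even_length_iff]
  have hne : w.length ≠ 1 := fun h1 => h (by simpa using w.adj_of_length_eq_one h1)
  have : 3 ≤ w.length := by rw [Nat.even_iff] at hodd; omega
  exact Nat.cast_le.2 this

lemma three_le_ediam_bip {v : V} {c : C} (h : ¬adj v c) : 3 ≤ (bip adj).ediam :=
  (three_le_edist_bip h).trans edist_le_ediam

def RectangleFree (adj : V → C → Prop) : Prop :=
  ∀ ⦃v v' c c'⦄, adj v c → adj v c' → adj v' c → adj v' c' → v = v' ∨ c = c'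

lemma six_le_length_of_isCycle_bip (h : RectangleFree adj) {x : V ⊕ C} {w : (bip adj).Walk x x}
    (hw : w.IsCycle) : 6 ≤ w.length := by
  have heven : Even w.length := by simp [bip_even_length_iff]
  have hne : w.length ≠ 4 := by
    intro h4
    obtain ⟨y, z, t, hxy, hyz, hzt, htx, hxz, hyt⟩ := hw.exists_of_length_eq_four h4
    rcases x with v | c <;> rcases y with v₁ | c₁ <;> rcases z with v₂ | c₂ <;>
      rcases t with v₃ | c₃ <;> simp only [bip_adj_inl_inr, bip_adj_inr_inl,
        bip_not_adj_inl_inl, bip_not_adj_inr_inr, ne_eq, Sum.inl.injEq, Sum.inr.injEq]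
        at hxy hyz hzt htx hxz hyt
    · exact (h hxy htx hyz hzt).elim hxz hyt
    · exact (h hxy hyz htx hzt).elim hyt hxz
  have := hw.three_le_length
  rw [Nat.even_iff] at heven
  omega

lemma six_le_egirth_bip (h : RectangleFree adj) : 6 ≤ (bip adj).egirth :=
  le_egirth.2 fun _ _ hw => Nat.cast_le.2 (six_le_length_of_isCycle_bip h hw)

lemma egirth_bip_le_six {v₁ v₂ v₃ : V} {c₁ c₂ c₃ : C} (hv₁₂ : v₁ ≠ v₂) (hv₁₃ : v₁ ≠ v₃)
    (hv₂₃ : v₂ ≠ v₃) (hc₁₂ : c₁ ≠ c₂) (hc₁₃ : c₁ ≠ c₃) (hc₂₃ : c₂ ≠ c₃)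
    (h₁₁ : adj v₁ c₁) (h₂₁ : adj v₂ c₁) (h₂₂ : adj v₂ c₂) (h₃₂ : adj v₃ c₂) (h₃₃ : adj v₃ c₃)
    (h₁₃ : adj v₁ c₃) : (bip adj).egirth ≤ 6 := by
  let w : (bip adj).Walk (.inl v₁) (.inl v₁) :=
    .cons (bip_adj_inl_inr.2 h₁₁) <| .cons (bip_adj_inr_inl.2 h₂₁) <|
    .cons (bip_adj_inl_inr.2 h₂₂) <| .cons (bip_adj_inr_inl.2 h₃₂) <|
    .cons (bip_adj_inl_inr.2 h₃₃) <| .cons (bip_adj_inr_inl.2 h₁₃) .nil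
  have hw : w.IsCycle := by
    simp [w, Walk.cons_isCycle_iff, Walk.cons_isPath_iff, hv₁₂, hv₁₃, hv₂₃, hc₁₂, hc₁₃, hc₂₃,
      hv₁₂.symm, hv₁₃.symm]
  exact egirth_le_length hw

lemma ediam_bip_le_three (hV : ∀ v v' : V, v ≠ v' → ∃ c, adj v c ∧ adj v' c)
    (hC : ∀ c c' : C, c ≠ c' → ∃ v, adj v c ∧ adj v c') (hnbr : ∀ c : C, ∃ v, adj v c) :
    (bip adj).ediam ≤ 3 := by
  have hVV (v v' : V) : (bip adj).edist (.inl v) (.inl v') ≤ 2 := by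
    obtain rfl | hne := eq_or_ne v v'
    · simp
    obtain ⟨c, hc, hc'⟩ := hV v v' hne
    exact edist_le_two_of_adj_of_adj (bip_adj_inl_inr.2 hc) (bip_adj_inr_inl.2 hc')
  have hCC (c c' : C) : (bip adj).edist (.inr c) (.inr c') ≤ 2 := by
    obtain rfl | hne := eq_or_ne c c'
    · simp
    obtain ⟨v, hv, hv'⟩ := hC c c' hne
    exact edist_le_two_of_adj_of_adj (bip_adj_inr_inl.2 hv) (bip_adj_inl_inr.2 hv')
  have hVC (v : V) (c : C) : (bip adj).edist (.inl v) (.inr c) ≤ 3 := by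
    obtain ⟨v', hv'⟩ := hnbr c
    calc (bip adj).edist (.inl v) (.inr c)
        ≤ (bip adj).edist (.inl v) (.inl v') + (bip adj).edist (.inl v') (.inr c) :=
          SimpleGraph.edist_triangle
      _ ≤ 2 + 1 := add_le_add (hVV v v') (edist_le_one_iff_adj_or_eq.2 (.inl (by simpa)))
      _ = 3 := by norm_num
  refine ediam_le_of_edist_le ?_
  rintro (v | c) (v' | c')
  · exact (hVV v v').trans (by norm_num)
  · exact hVC v c'
  · rw [SimpleGraph.edist_comm]; exact hVC v' c
  · exact (hCC c c').trans (by norm_num)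

end Bipartite

namespace TypeII3

variable {F : Type*} [Field F]

lemma rectangleFree_adj : RectangleFree (adj F) := by
  intro v v' c c' h₁ h₂ h₃ h₄
  rcases v with _ | (j | ⟨i, j⟩) <;> rcases v' with _ | (j' | ⟨i', j'⟩) <;>
    rcases c with _ | (k | ⟨a, b⟩) <;> rcases c' with _ | (k' | ⟨a', b'⟩) <;>
    simp_all [adj]
  have h : (i - i') * (a - a') = 0 := by linear_combination h₃ - h₄
  rcases mul_eq_zero.1 h with h | h
  · obtain rfl := sub_eq_zero.1 h
    exact .inl ⟨rfl, by linear_combination h₃⟩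
  · exact .inr ⟨sub_eq_zero.1 h, .inl (sub_eq_zero.1 h)⟩

lemma exists_adj_adj_of_ne_vn {v v' : VN F} (h : v ≠ v') : ∃ c, adj F v c ∧ adj F v' c := by
  rcases v with _ | (j | ⟨i, j⟩) <;> rcases v' with _ | (j' | ⟨i', j'⟩)
  · exact absurd rfl h
  · exact ⟨.inl (), trivial, trivial⟩
  · exact ⟨.inr (.inl i'), trivial, rfl⟩
  · exact ⟨.inl (), trivial, trivial⟩
  · exact ⟨.inl (), trivial, trivial⟩
  · exact ⟨.inr (.inr (j, j' + i' * j)), rfl, rfl⟩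
  · exact ⟨.inr (.inl i), rfl, trivial⟩
  · exact ⟨.inr (.inr (j', j + i * j')), rfl, rfl⟩
  · obtain rfl | hi := eq_or_ne i i'
    · exact ⟨.inr (.inl i), rfl, rfl⟩
    refine ⟨.inr (.inr ((j' - j) / (i - i'), j + i * ((j' - j) / (i - i')))), rfl, ?_⟩
    change _ = j' + i' * _
    field_simp [sub_ne_zero.2 hi]
    ring

lemma exists_adj_adj_of_ne_cn {c c' : CN F} (h : c ≠ c') : ∃ v, adj F v c ∧ adj F v c' := by
  rcases c with _ | (k | ⟨a, b⟩) <;> rcases c' with _ | (k' | ⟨a', b'⟩)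
  · exact absurd rfl h
  · exact ⟨.inl (), trivial, trivial⟩
  · exact ⟨.inr (.inl a'), trivial, rfl⟩
  · exact ⟨.inl (), trivial, trivial⟩
  · exact ⟨.inl (), trivial, trivial⟩
  · exact ⟨.inr (.inr (k, b' - k * a')), rfl, (sub_add_cancel _ _).symm⟩
  · exact ⟨.inr (.inl a), rfl, trivial⟩
  · exact ⟨.inr (.inr (k', b - k' * a)), (sub_add_cancel _ _).symm, rfl⟩
  · obtain rfl | ha := eq_or_ne a a'
    · exact ⟨.inr (.inl a), rfl, rfl⟩
    refine ⟨.inr (.inr ((b - b') / (a - a'), b - (b - b') / (a - a') * a)),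
      (sub_add_cancel _ _).symm, ?_⟩
    change b' = _ + _ * a'
    field_simp [sub_ne_zero.2 ha]
    ring

lemma exists_adj (c : CN F) : ∃ v, adj F v c := by
  rcases c with _ | (k | ⟨a, b⟩)
  · exact ⟨.inl (), trivial⟩
  · exact ⟨.inl (), trivial⟩
  · exact ⟨.inr (.inl a), rfl⟩

lemma egirth_le_six : (bip (adj F)).egirth ≤ 6 :=
  egirth_bip_le_six (v₁ := .inl ()) (v₂ := .inr (.inl 0)) (v₃ := .inr (.inr (0, 0)))
    (c₁ := .inl ()) (c₂ := .inr (.inr (0, 0))) (c₃ := .inr (.inl 0))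
    (by simp) (by simp) (by simp) (by simp) (by simp) (by simp)
    trivial trivial rfl (by simp [adj]) rfl trivial

end TypeII3

theorem stmt_9_general (F : Type*) [Field F] :
    -- girth exactly 6 and diameter exactly 3
    (bip (TypeII3.adj F)).egirth = 6 ∧ (bip (TypeII3.adj F)).ediam = 3 :=
  ⟨le_antisymm TypeII3.egirth_le_six (six_le_egirth_bip TypeII3.rectangleFree_adj),
    le_antisymm
      (ediam_bip_le_three (fun _ _ => TypeII3.exists_adj_adj_of_ne_vn)
        (fun _ _ => TypeII3.exists_adj_adj_of_ne_cn) TypeII3.exists_adj)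
      (three_le_ediam_bip (v := .inl ()) (c := .inr (.inr (0, 0))) not_false)⟩

theorem stmt_9 (p s : ℕ) (hp : p.Prime) (hs : 0 < s)
    (F : Type*) [Field F] [Fintype F] (hF : Fintype.card F = p ^ s) :
    -- girth exactly 6 and diameter exactly 3
    (bip (TypeII3.adj F)).egirth = 6 ∧ (bip (TypeII3.adj F)).ediam = 3 :=
  stmt_9_general F
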